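/- Let Q be a symmetric n×n real matrix, d ∈ ℝⁿ, A ∈ ℝ^{m×n}, b ∈ ℝᵐ, β > 0. If x̄ is a KKT point of the QP and z̄ ∈ F, then there exists a symmetric positive semidefinite matrix U ∈ 𝒮^{n+1} such that (i) the matrix [−A, b; 0ᵀ, 1] U [−A, b; 0ᵀ, 1]ᵀ is entrywise nonnegative, and (ii) z̄ − x̄ = [I, −x̄] U (Qx̄ + d; −x̄ᵀQx̄ − dᵀx̄ + β), where [I, −x̄] ∈ ℝ^{n×(n+1)} and (Qx̄ + d; −x̄ᵀQx̄ − dᵀx̄ + β) ∈ ℝ^{n+1}. (In other words, the dual SDP used to search for a cut is feasible.) -/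

import Mathlib

/-!
Take `U = t · v vᵀ` with `v = (z̄; 1)`. Then `[−A, b; 0ᵀ, 1] v = (b − A z̄; 1) ≥ 0`, so (i) holds
for every `t ≥ 0`, and `[I, −x̄] U u = t (vᵀu) (z̄ − x̄)` where `u = (Qx̄ + d; −x̄ᵀQx̄ − dᵀx̄ + β)`.
Now `vᵀu = (z̄ − x̄)ᵀ(Qx̄ + d) + β`, and by stationarity and complementary slackness
`(z̄ − x̄)ᵀ(Qx̄ + d) = λ̄ᵀ(b − A z̄) ≥ 0`; hence `vᵀu ≥ β > 0` and `t = (vᵀu)⁻¹` gives (ii).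
-/

open Matrix

/-- The `(m+1) × (n+1)` block matrix `B₁ = [−A, b; 0ᵀ, 1]`. -/
noncomputable def feasMat {n m : ℕ} (A : Matrix (Fin m) (Fin n) ℝ) (b : Fin m → ℝ) :
    Matrix (Fin m ⊕ Unit) (Fin n ⊕ Unit) ℝ :=
  Matrix.of fun i j =>
    match i, j with
    | Sum.inl i, Sum.inl j => -A i j
    | Sum.inl i, Sum.inr _ => b i
    | Sum.inr _, Sum.inl _ => 0
    | Sum.inr _, Sum.inr _ => 1

/-- The `n × (n+1)` block matrix `[I, −x̄]`. -/
noncomputable def projMat {n : ℕ} (xbar : Fin n → ℝ) :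
    Matrix (Fin n) (Fin n ⊕ Unit) ℝ :=
  Matrix.of fun i j =>
    match j with
    | Sum.inl j => if i = j then 1 else 0
    | Sum.inr _ => -xbar i

/-- The vector `(Qx̄ + d; −x̄ᵀQx̄ − dᵀx̄ + β) ∈ ℝ^{n+1}`. -/
noncomputable def uVec {n : ℕ} (Q : Matrix (Fin n) (Fin n) ℝ) (d xbar : Fin n → ℝ)
    (β : ℝ) : Fin n ⊕ Unit → ℝ :=
  Sum.elim (Q *ᵥ xbar + d) (fun _ => -(xbar ⬝ᵥ (Q *ᵥ xbar)) - d ⬝ᵥ xbar + β)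

section KKT

variable {R ι κ : Type*} [CommRing R] [PartialOrder R] [IsOrderedRing R] [Fintype ι] [Fintype κ]

theorem sub_dotProduct_neg_transpose_mulVec_nonneg {A : Matrix ι κ R} {b : ι → R}
    {x z : κ → R} {lam : ι → R} (hlam : 0 ≤ lam) (hcs : (A *ᵥ x - b) ⬝ᵥ lam = 0)
    (hz : A *ᵥ z ≤ b) : 0 ≤ (z - x) ⬝ᵥ -(Aᵀ *ᵥ lam) := by
  have hslack : (A *ᵥ z - b) ⬝ᵥ lam ≤ 0 :=
    Finset.sum_nonpos fun i _ => mul_nonpos_of_nonpos_of_nonneg (sub_nonpos.2 (hz i)) (hlam i)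
  have hsplit : (z - x) ⬝ᵥ (Aᵀ *ᵥ lam) = (A *ᵥ z - b) ⬝ᵥ lam - (A *ᵥ x - b) ⬝ᵥ lam := by
    rw [dotProduct_mulVec, vecMul_transpose, ← sub_dotProduct, mulVec_sub]
    abel_nf
  rw [dotProduct_neg, hsplit, hcs, sub_zero, neg_nonneg]
  exact hslack

end KKT

section RankOne

variable {R ι κ : Type*} [CommSemiring R] [Fintype κ]

theorem mul_smul_vecMulVec_mul_transpose (B : Matrix ι κ R) (t : R) (v : κ → R) :
    B * (t • vecMulVec v v) * Bᵀ = t • vecMulVec (B *ᵥ v) (B *ᵥ v) := by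
  rw [Matrix.mul_smul, Matrix.smul_mul, mul_vecMulVec, vecMulVec_mul, vecMul_transpose]

theorem smul_vecMulVec_mulVec (t : R) (v u : κ → R) :
    (t • vecMulVec v v) *ᵥ u = (t * (v ⬝ᵥ u)) • v := by
  rw [smul_mulVec, vecMulVec_mulVec, op_smul_eq_smul, smul_smul]

end RankOne

section BlockMatrices

variable {n m : ℕ}

theorem feasMat_mulVec_sumElim_one (A : Matrix (Fin m) (Fin n) ℝ) (b : Fin m → ℝ)
    (z : Fin n → ℝ) : feasMat A b *ᵥ Sum.elim z 1 = Sum.elim (b - A *ᵥ z) 1 := by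
  ext (i | _) <;>
    simp [feasMat, mulVec, dotProduct, Fintype.sum_sum_type, sub_eq_neg_add]

theorem projMat_mulVec_sumElim_one (x z : Fin n → ℝ) :
    projMat x *ᵥ Sum.elim z 1 = z - x := by
  ext i
  simp [projMat, mulVec, dotProduct, Fintype.sum_sum_type, sub_eq_add_neg]

theorem sumElim_one_dotProduct_uVec (Q : Matrix (Fin n) (Fin n) ℝ) (d x z : Fin n → ℝ)
    (β : ℝ) : Sum.elim z 1 ⬝ᵥ uVec Q d x β = (z - x) ⬝ᵥ (Q *ᵥ x + d) + β := by
  rw [dotProduct, Fintype.sum_sum_type]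
  change z ⬝ᵥ (Q *ᵥ x + d) + ∑ _ : Unit, 1 * (-(x ⬝ᵥ (Q *ᵥ x)) - d ⬝ᵥ x + β) = _
  rw [Fintype.sum_unique, one_mul, sub_dotProduct, dotProduct_add x, dotProduct_comm x d]
  ring

end BlockMatrices

theorem dual_SDP_feasible {n m : ℕ} (Q : Matrix (Fin n) (Fin n) ℝ)
    (d : Fin n → ℝ) (A : Matrix (Fin m) (Fin n) ℝ) (b : Fin m → ℝ)
    (β : ℝ) (hβ : 0 < β)
    (xbar : Fin n → ℝ)
    (lam : Fin m → ℝ) (hlam : 0 ≤ lam)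
    (hstat : Q *ᵥ xbar + d = -(Aᵀ *ᵥ lam))
    (hcs : (A *ᵥ xbar - b) ⬝ᵥ lam = 0)
    (zbar : Fin n → ℝ) (hzbar : A *ᵥ zbar ≤ b) :
    ∃ U : Matrix (Fin n ⊕ Unit) (Fin n ⊕ Unit) ℝ, U.PosSemidef ∧
      (∀ i j, 0 ≤ (feasMat A b * U * (feasMat A b)ᵀ) i j) ∧
      zbar - xbar = projMat xbar *ᵥ (U *ᵥ uVec Q d xbar β) := by
  set v : Fin n ⊕ Unit → ℝ := Sum.elim zbar 1
  have hvu : 0 < v ⬝ᵥ uVec Q d xbar β := by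
    rw [sumElim_one_dotProduct_uVec, hstat]
    linarith [sub_dotProduct_neg_transpose_mulVec_nonneg hlam hcs hzbar]
  have hBv : 0 ≤ feasMat A b *ᵥ v := by
    rintro (i | _)
    · simpa [v, feasMat_mulVec_sumElim_one] using hzbar i
    · simp [v, feasMat_mulVec_sumElim_one]
  refine ⟨(v ⬝ᵥ uVec Q d xbar β)⁻¹ • vecMulVec v v, ?_, fun i j => ?_, ?_⟩
  · simpa using (posSemidef_vecMulVec_self_star v).smul (inv_nonneg.2 hvu.le)
  · rw [mul_smul_vecMulVec_mul_transpose]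
    exact mul_nonneg (inv_nonneg.2 hvu.le) (mul_nonneg (hBv i) (hBv j))
  · rw [smul_vecMulVec_mulVec, inv_mul_cancel₀ hvu.ne', one_smul, projMat_mulVec_sumElim_one]
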